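/- arXiv:1110.3467 — 2 statements merged into one kernel-verified Lean document; each statement's English description precedes it below -/
import Mathlib

section
/- Let u, ω : ℝ³ → ℝ be smooth functions of (t, x, y) satisfying the KP system, and let h : ℝ → ℝ be smooth. Define C¹ = u h', C² = yω h'' - (u_xx + (1/2)u²)h', C³ = -ω h' - y u h'', where h', h'' are derivatives of h evaluated at t. Then D_t(C¹) + D_x(C²) + D_y(C³) = 0 identically. -/
/-- Partial derivative with respect to the first variable `t`. -/
noncomputable def pt (F : ℝ → ℝ → ℝ → ℝ) (t x y : ℝ) : ℝ := deriv (fun s => F s x y) t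

/-- Partial derivative with respect to the second variable `x`. -/
noncomputable def px (F : ℝ → ℝ → ℝ → ℝ) (t x y : ℝ) : ℝ := deriv (fun s => F t s y) x

/-- Partial derivative with respect to the third variable `y`. -/
noncomputable def py (F : ℝ → ℝ → ℝ → ℝ) (t x y : ℝ) : ℝ := deriv (fun s => F t x s) y

/-- Smoothness of a function of three real variables. -/
def Smooth3 (F : ℝ → ℝ → ℝ → ℝ) : Prop :=
  ContDiff ℝ (⊤ : ℕ∞) (fun p : ℝ × ℝ × ℝ => F p.1 p.2.1 p.2.2)

/-- The Kadomtsev-Petviashvili system: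
`u_t - u u_x - u_xxx - ω_y = 0`, `ω_x - u_y = 0`. -/
def KPsystem (u ω : ℝ → ℝ → ℝ → ℝ) : Prop :=
  ∀ t x y : ℝ,
    pt u t x y - u t x y * px u t x y - px (px (px u)) t x y - py ω t x y = 0 ∧
    px ω t x y - py u t x y = 0


lemma sliceT {F : ℝ → ℝ → ℝ → ℝ} (hF : Smooth3 F) (x y : ℝ) :
    ContDiff ℝ (⊤:ℕ∞) (fun t => F t x y) :=
  (hF.comp (contDiff_id.prodMk (contDiff_const.prodMk contDiff_const))).of_le (by simp)

lemma sliceX {F : ℝ → ℝ → ℝ → ℝ} (hF : Smooth3 F) (t y : ℝ) :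
    ContDiff ℝ (⊤:ℕ∞) (fun x => F t x y) :=
  (hF.comp (contDiff_const.prodMk (contDiff_id.prodMk contDiff_const))).of_le (by simp)

lemma sliceY {F : ℝ → ℝ → ℝ → ℝ} (hF : Smooth3 F) (t x : ℝ) :
    ContDiff ℝ (⊤:ℕ∞) (fun y => F t x y) :=
  (hF.comp (contDiff_const.prodMk (contDiff_const.prodMk contDiff_id))).of_le (by simp)

/-- The conserved vector associated with the symmetry `X_h`
satisfies the conservation equation on solutions of the KP system. -/
theorem conserved_vector_Xh (u ω : ℝ → ℝ → ℝ → ℝ) (h : ℝ → ℝ)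
    (hu : Smooth3 u) (hω : Smooth3 ω) (hh : ContDiff ℝ (⊤ : ℕ∞) h)
    (hKP : KPsystem u ω)
    (C1 C2 C3 : ℝ → ℝ → ℝ → ℝ)
    (hC1 : C1 = fun t x y => u t x y * deriv h t)
    (hC2 : C2 = fun t x y =>
      y * ω t x y * deriv (deriv h) t
      - (px (px u) t x y + (1/2) * (u t x y)^2) * deriv h t)
    (hC3 : C3 = fun t x y =>
      -(ω t x y) * deriv h t - y * u t x y * deriv (deriv h) t) :
    ∀ t x y : ℝ, pt C1 t x y + px C2 t x y + py C3 t x y = 0 := by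

  subst hC1 hC2 hC3
  intro t x y
  obtain ⟨e1, e2⟩ := hKP t x y
  simp only [pt, px, py] at e1 e2 ⊢
  set a := deriv h t with ha
  set b := deriv (deriv h) t with hb
  have hw : ContDiff ℝ (⊤:ℕ∞) (fun s => u t s y) := sliceX hu t y
  have hw1 : ContDiff ℝ (⊤:ℕ∞) (deriv (fun s => u t s y)) := (contDiff_infty_iff_deriv.mp hw).2
  have hw2 : ContDiff ℝ (⊤:ℕ∞) (deriv (deriv (fun s => u t s y))) :=
    (contDiff_infty_iff_deriv.mp hw1).2
  have hhd : ContDiff ℝ (⊤:ℕ∞) (deriv h) := (contDiff_infty_iff_deriv.mp (hh.of_le (by simp))).2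
  -- term 1
  have H1 : HasDerivAt (fun s => u s x y * deriv h s)
      (deriv (fun s => u s x y) t * a + u t x y * b) t := by
    exact (((sliceT hu x y).differentiable (by simp) t).hasDerivAt).mul
      ((hhd.differentiable (by simp) t).hasDerivAt)
  -- term 2
  have hwd : HasDerivAt (fun s => u t s y) (deriv (fun s => u t s y) x) x :=
    (hw.differentiable (by simp) x).hasDerivAt
  have hod : HasDerivAt (fun s => ω t s y) (deriv (fun s => ω t s y) x) x :=
    ((sliceX hω t y).differentiable (by simp) x).hasDerivAt
  have h2d : HasDerivAt (fun s => deriv (deriv (fun r => u t r y)) s)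
      (deriv (deriv (deriv (fun r => u t r y))) x) x :=
    (hw2.differentiable (by simp) x).hasDerivAt
  have H2 : HasDerivAt
      (fun s => y * ω t s y * b
        - (deriv (deriv (fun r => u t r y)) s + 1/2 * (u t s y)^2) * a)
      (y * deriv (fun s => ω t s y) x * b
        - (deriv (deriv (deriv (fun r => u t r y))) x
           + 1/2 * ((2:ℕ) * (u t x y)^(2-1) * deriv (fun s => u t s y) x)) * a) x := by
    exact ((hod.const_mul y).mul_const b).sub
      (((h2d.add ((hwd.pow 2).const_mul (1/2))).mul_const a))
  -- term 3
  have hud : HasDerivAt (fun s => u t x s) (deriv (fun s => u t x s) y) y :=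
    ((sliceY hu t x).differentiable (by simp) y).hasDerivAt
  have hoyd : HasDerivAt (fun s => ω t x s) (deriv (fun s => ω t x s) y) y :=
    ((sliceY hω t x).differentiable (by simp) y).hasDerivAt
  have H3 : HasDerivAt (fun s => -(ω t x s) * a - s * u t x s * b)
      (-(deriv (fun s => ω t x s) y) * a
        - (1 * u t x y + y * deriv (fun s => u t x s) y) * b) y := by
    exact ((hoyd.neg).mul_const a).sub (((hasDerivAt_id y).mul hud).mul_const b)
  rw [H1.deriv, H2.deriv, H3.deriv]
  push_cast
  linear_combination a * e1 + b * y * e2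
end

section
/- Let u, ω : ℝ³ → ℝ be smooth functions of (t, x, y) satisfying the KP system, and let f : ℝ → ℝ be smooth. Define P = ((3/2)u_x² + (3/2)ω² - u³ - 3u·u_xx)·f - (1/2)f'·x·u² - (1/4)f''·y²·u² and Q = -3f·u·ω - f'·y·u² (derivatives of f evaluated at t). Then the following identity holds pointwise: -3(u²u_x + u·u_xxx + u·ω_y)f - (2u² + x·u·u_x + 2y·u·u_y)f' - (x·u + (1/2)y²·u·u_x)f'' - (1/2)y²·u·f''' = -(1/2)f'·u² - (x f'' + (1/2)y² f''')·u + D_x(P) + D_y(Q), where D_x, D_y denote partial derivatives of the composite expressions with respect to x and y. -/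
lemma sliceX_contDiff {F : ℝ → ℝ → ℝ → ℝ} (hF : Smooth3 F) (t y : ℝ) :
    ContDiff ℝ (⊤ : ℕ∞) (fun s => F t s y) := by
  have : (fun s => F t s y) = (fun p : ℝ × ℝ × ℝ => F p.1 p.2.1 p.2.2) ∘ (fun s => (t, s, y)) := rfl
  rw [this]
  exact hF.comp (contDiff_const.prodMk (contDiff_id.prodMk contDiff_const))

lemma sliceY_contDiff {F : ℝ → ℝ → ℝ → ℝ} (hF : Smooth3 F) (t x : ℝ) :
    ContDiff ℝ (⊤ : ℕ∞) (fun s => F t x s) := by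
  have : (fun s => F t x s) = (fun p : ℝ × ℝ × ℝ => F p.1 p.2.1 p.2.2) ∘ (fun s => (t, x, s)) := rfl
  rw [this]
  exact hF.comp (contDiff_const.prodMk (contDiff_const.prodMk contDiff_id))

lemma hasDerivAt_px {F : ℝ → ℝ → ℝ → ℝ} (hF : Smooth3 F) (t x y : ℝ) :
    HasDerivAt (fun s => F t s y) (px F t x y) x :=
  (((sliceX_contDiff hF t y).differentiable (by simp)) x).hasDerivAt

lemma hasDerivAt_py {F : ℝ → ℝ → ℝ → ℝ} (hF : Smooth3 F) (t x y : ℝ) :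
    HasDerivAt (fun s => F t x s) (py F t x y) y :=
  (((sliceY_contDiff hF t x).differentiable (by simp)) y).hasDerivAt

lemma smooth3_px {F : ℝ → ℝ → ℝ → ℝ} (hF : Smooth3 F) : Smooth3 (px F) := by
  have key : ∀ t x y : ℝ, px F t x y
      = fderiv ℝ (fun p : ℝ × ℝ × ℝ => F p.1 p.2.1 p.2.2) (t, x, y) (0, 1, 0) := by
    intro t x y
    have h1 : HasFDerivAt (fun p : ℝ × ℝ × ℝ => F p.1 p.2.1 p.2.2)
        (fderiv ℝ (fun p : ℝ × ℝ × ℝ => F p.1 p.2.1 p.2.2) (t, x, y)) (t, x, y) :=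
      (hF.differentiable (by simp) (t, x, y)).hasFDerivAt
    have hc : HasDerivAt (fun s : ℝ => ((t, s, y) : ℝ × ℝ × ℝ)) ((0 : ℝ), (1 : ℝ), (0 : ℝ)) x :=
      (hasDerivAt_const x t).prodMk ((hasDerivAt_id x).prodMk (hasDerivAt_const x y))
    have h2 : HasDerivAt (fun s => F t s y)
        (fderiv ℝ (fun p : ℝ × ℝ × ℝ => F p.1 p.2.1 p.2.2) (t, x, y) (0, 1, 0)) x :=
      (h1.comp_hasDerivAt x hc :)
    rw [px]; exact h2.deriv
  unfold Smooth3
  have he : (fun p : ℝ × ℝ × ℝ => px F p.1 p.2.1 p.2.2)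
      = fun p : ℝ × ℝ × ℝ =>
        fderiv ℝ (fun q : ℝ × ℝ × ℝ => F q.1 q.2.1 q.2.2) p (0, 1, 0) := by
    funext p; exact key p.1 p.2.1 p.2.2
  rw [he]
  exact (hF.fderiv_right (le_of_eq (by simp))).clm_apply contDiff_const

lemma smooth3_py {F : ℝ → ℝ → ℝ → ℝ} (hF : Smooth3 F) : Smooth3 (py F) := by
  have key : ∀ t x y : ℝ, py F t x y
      = fderiv ℝ (fun p : ℝ × ℝ × ℝ => F p.1 p.2.1 p.2.2) (t, x, y) (0, 0, 1) := by
    intro t x y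
    have h1 : HasFDerivAt (fun p : ℝ × ℝ × ℝ => F p.1 p.2.1 p.2.2)
        (fderiv ℝ (fun p : ℝ × ℝ × ℝ => F p.1 p.2.1 p.2.2) (t, x, y)) (t, x, y) :=
      (hF.differentiable (by simp) (t, x, y)).hasFDerivAt
    have hc : HasDerivAt (fun s : ℝ => ((t, x, s) : ℝ × ℝ × ℝ)) ((0 : ℝ), (0 : ℝ), (1 : ℝ)) y :=
      (hasDerivAt_const y t).prodMk ((hasDerivAt_const y x).prodMk (hasDerivAt_id y))
    have h2 : HasDerivAt (fun s => F t x s)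
        (fderiv ℝ (fun p : ℝ × ℝ × ℝ => F p.1 p.2.1 p.2.2) (t, x, y) (0, 0, 1)) y :=
      (h1.comp_hasDerivAt y hc :)
    rw [py]; exact h2.deriv
  unfold Smooth3
  have he : (fun p : ℝ × ℝ × ℝ => py F p.1 p.2.1 p.2.2)
      = fun p : ℝ × ℝ × ℝ =>
        fderiv ℝ (fun q : ℝ × ℝ × ℝ => F q.1 q.2.1 q.2.2) p (0, 0, 1) := by
    funext p; exact key p.1 p.2.1 p.2.2
  rw [he]
  exact (hF.fderiv_right (le_of_eq (by simp))).clm_apply contDiff_const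

/-- Reduction of the first component of the conserved vector of
`X_f` modulo total `x`- and `y`-derivatives, on solutions of the KP system. -/
theorem C1_reduction_Xf (u ω : ℝ → ℝ → ℝ → ℝ) (f : ℝ → ℝ)
    (hu : Smooth3 u) (hω : Smooth3 ω) (hf : ContDiff ℝ (⊤ : ℕ∞) f)
    (hKP : KPsystem u ω)
    (P Q : ℝ → ℝ → ℝ → ℝ)
    (hP : P = fun t x y =>
      ((3/2) * (px u t x y)^2 + (3/2) * (ω t x y)^2 - (u t x y)^3
        - 3 * u t x y * px (px u) t x y) * f t
      - (1/2) * deriv f t * x * (u t x y)^2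
      - (1/4) * deriv (deriv f) t * y^2 * (u t x y)^2)
    (hQ : Q = fun t x y =>
      -3 * f t * u t x y * ω t x y - deriv f t * y * (u t x y)^2) :
    ∀ t x y : ℝ,
      -3 * ((u t x y)^2 * px u t x y + u t x y * px (px (px u)) t x y
          + u t x y * py ω t x y) * f t
        - (2 * (u t x y)^2 + x * u t x y * px u t x y
            + 2 * y * u t x y * py u t x y) * deriv f t
        - (x * u t x y + (1/2) * y^2 * u t x y * px u t x y) * deriv (deriv f) t
        - (1/2) * y^2 * u t x y * deriv (deriv (deriv f)) t
      = -(1/2) * deriv f t * (u t x y)^2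
        - (x * deriv (deriv f) t + (1/2) * y^2 * deriv (deriv (deriv f)) t) * u t x y
        + px P t x y + py Q t x y := by
  intro t x y
  obtain ⟨_, hkp2⟩ := hKP t x y
  have Hu := hasDerivAt_px hu t x y
  have Hux := hasDerivAt_px (smooth3_px hu) t x y
  have Huxx := hasDerivAt_px (smooth3_px (smooth3_px hu)) t x y
  have Hw := hasDerivAt_px hω t x y
  have Huy := hasDerivAt_py hu t x y
  have Hwy := hasDerivAt_py hω t x y
  have hPx : px P t x y =
      ((3/2) * (2 * px u t x y * px (px u) t x y)
          + (3/2) * (2 * ω t x y * px ω t x y)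
          - 3 * (u t x y)^2 * px u t x y
          - 3 * (px u t x y * px (px u) t x y + u t x y * px (px (px u)) t x y)) * f t
        - ((1/2) * deriv f t * (u t x y)^2
            + (1/2) * deriv f t * x * (2 * u t x y * px u t x y))
        - (1/4) * deriv (deriv f) t * y^2 * (2 * u t x y * px u t x y) := by
    have H : HasDerivAt (fun s =>
        ((3/2) * (px u t s y)^2 + (3/2) * (ω t s y)^2 - (u t s y)^3
            - 3 * u t s y * px (px u) t s y) * f t
          - (1/2) * deriv f t * s * (u t s y)^2
          - (1/4) * deriv (deriv f) t * y^2 * (u t s y)^2)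
        (((3/2) * (2 * px u t x y * px (px u) t x y)
          + (3/2) * (2 * ω t x y * px ω t x y)
          - 3 * (u t x y)^2 * px u t x y
          - 3 * (px u t x y * px (px u) t x y + u t x y * px (px (px u)) t x y)) * f t
        - ((1/2) * deriv f t * (u t x y)^2
            + (1/2) * deriv f t * x * (2 * u t x y * px u t x y))
        - (1/4) * deriv (deriv f) t * y^2 * (2 * u t x y * px u t x y)) x := by
      have h1 : HasDerivAt (fun s => (3/2 : ℝ) * (px u t s y)^2)
          ((3/2) * (2 * px u t x y * px (px u) t x y)) x := by
        have := (Hux.pow 2).const_mul (3/2 : ℝ)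
        simp only [Pi.pow_def, Pi.mul_def] at this
        convert this using 1 <;> (push_cast; try ring) <;> rfl
      have h2 : HasDerivAt (fun s => (3/2 : ℝ) * (ω t s y)^2)
          ((3/2) * (2 * ω t x y * px ω t x y)) x := by
        have := (Hw.pow 2).const_mul (3/2 : ℝ)
        simp only [Pi.pow_def, Pi.mul_def] at this
        convert this using 1 <;> (push_cast; try ring) <;> rfl
      have h3 : HasDerivAt (fun s => (u t s y)^3) (3 * (u t x y)^2 * px u t x y) x := by
        have := Hu.pow 3
        simp only [Pi.pow_def, Pi.mul_def] at this
        convert this using 1 <;> (push_cast; try ring) <;> rfl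
      have h4 : HasDerivAt (fun s => 3 * u t s y * px (px u) t s y)
          (3 * (px u t x y * px (px u) t x y + u t x y * px (px (px u)) t x y)) x := by
        have := (Hu.const_mul (3 : ℝ)).mul Huxx
        simp only [Pi.pow_def, Pi.mul_def] at this
        convert this using 1 <;> (try ring) <;> rfl
      have h5 : HasDerivAt (fun s => (1/2) * deriv f t * s * (u t s y)^2)
          ((1/2) * deriv f t * (u t x y)^2
            + (1/2) * deriv f t * x * (2 * u t x y * px u t x y)) x := by
        have := ((hasDerivAt_id x).const_mul ((1/2 : ℝ) * deriv f t)).mul (Hu.pow 2)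
        simp only [id_eq] at this
        simp only [Pi.pow_def, Pi.mul_def] at this
        convert this using 1 <;> (push_cast; try ring) <;> rfl
      have h6 : HasDerivAt (fun s => (1/4) * deriv (deriv f) t * y^2 * (u t s y)^2)
          ((1/4) * deriv (deriv f) t * y^2 * (2 * u t x y * px u t x y)) x := by
        have := (Hu.pow 2).const_mul ((1/4 : ℝ) * deriv (deriv f) t * y^2)
        simp only [Pi.pow_def, Pi.mul_def] at this
        convert this using 1 <;> (push_cast; try ring) <;> rfl
      exact ((((h1.add h2).sub h3).sub h4).mul_const (f t)).sub h5 |>.sub h6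
    rw [hP, px]
    exact H.deriv
  have hQy : py Q t x y =
      ((-3 * f t) * py u t x y * ω t x y + (-3 * f t) * u t x y * py ω t x y)
        - (deriv f t * (u t x y)^2 + deriv f t * y * (2 * u t x y * py u t x y)) := by
    have H : HasDerivAt (fun s =>
        -3 * f t * u t x s * ω t x s - deriv f t * s * (u t x s)^2)
        (((-3 * f t) * py u t x y * ω t x y + (-3 * f t) * u t x y * py ω t x y)
          - (deriv f t * (u t x y)^2 + deriv f t * y * (2 * u t x y * py u t x y))) y := by
      have h1 : HasDerivAt (fun s => -3 * f t * u t x s * ω t x s)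
          ((-3 * f t) * py u t x y * ω t x y + (-3 * f t) * u t x y * py ω t x y) y := by
        have := (Huy.const_mul ((-3 : ℝ) * f t)).mul Hwy
        simp only [Pi.pow_def, Pi.mul_def] at this
        convert this using 1 <;> (try ring) <;> rfl
      have h2 : HasDerivAt (fun s => deriv f t * s * (u t x s)^2)
          (deriv f t * (u t x y)^2 + deriv f t * y * (2 * u t x y * py u t x y)) y := by
        have := ((hasDerivAt_id y).const_mul (deriv f t)).mul (Huy.pow 2)
        simp only [id_eq] at this
        simp only [Pi.pow_def, Pi.mul_def] at this
        convert this using 1 <;> (push_cast; try ring) <;> rfl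
      exact h1.sub h2
    rw [hQ, py]
    exact H.deriv
  have hwx : px ω t x y = py u t x y := by linarith
  rw [hPx, hQy, hwx]
  ring
end
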